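/- arXiv:1302.4289 — 5 statements merged into one kernel-verified Lean document; each statement's English description precedes it below -/
import Mathlib

section
/- Let K be a field of characteristic 0, q ∈ K with q ≠ 0 and q² ≠ 1, and let V be the 2-dimensional K-vector space with basis {e₁, e₂}. Let σ : V ⊗ V → V ⊗ V be the braiding given by σ(e₁ ⊗ e₁) = e₁ ⊗ e₁, σ(e₁ ⊗ e₂) = q·e₂ ⊗ e₁, σ(e₂ ⊗ e₁) = q·e₁ ⊗ e₂ + (1 − q²)·e₂ ⊗ e₁, σ(e₂ ⊗ e₂) = e₂ ⊗ e₂. If m : V ⊗ V → V is any associative multiplication on V satisfying the braided algebra compatibilities (id_V ⊗ m)σ₁σ₂ = σ(m ⊗ id_V) and (m ⊗ id_V)σ₂σ₁ = σ(id_V ⊗ m) on V ⊗ V ⊗ V, then m = 0. -/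
open TensorProduct

noncomputable section

/-- `σ₁ = σ ⊗ id` as an endomorphism of `A ⊗ (A ⊗ A)`. -/
def braid1 {K : Type*} [Field K] {A : Type*} [AddCommGroup A] [Module K A]
    (σ : A ⊗[K] A →ₗ[K] A ⊗[K] A) :
    A ⊗[K] (A ⊗[K] A) →ₗ[K] A ⊗[K] (A ⊗[K] A) :=
  (TensorProduct.assoc K A A A).toLinearMap ∘ₗ
    TensorProduct.map σ LinearMap.id ∘ₗ (TensorProduct.assoc K A A A).symm.toLinearMap

/-- `σ₂ = id ⊗ σ` as an endomorphism of `A ⊗ (A ⊗ A)`. -/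
def braid2 {K : Type*} [Field K] {A : Type*} [AddCommGroup A] [Module K A]
    (σ : A ⊗[K] A →ₗ[K] A ⊗[K] A) :
    A ⊗[K] (A ⊗[K] A) →ₗ[K] A ⊗[K] (A ⊗[K] A) :=
  TensorProduct.map LinearMap.id σ

/-- A braiding is an invertible solution of the quantum Yang–Baxter equation. -/
def IsBraiding {K : Type*} [Field K] {A : Type*} [AddCommGroup A] [Module K A]
    (σ : A ⊗[K] A →ₗ[K] A ⊗[K] A) : Prop :=
  Function.Bijective σ ∧
    braid1 σ ∘ₗ braid2 σ ∘ₗ braid1 σ = braid2 σ ∘ₗ braid1 σ ∘ₗ braid2 σ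

/-- `m ⊗ id : A ⊗ (A ⊗ A) → A ⊗ A`. -/
def mulL {K : Type*} [Field K] {A : Type*} [AddCommGroup A] [Module K A]
    (m : A ⊗[K] A →ₗ[K] A) : A ⊗[K] (A ⊗[K] A) →ₗ[K] A ⊗[K] A :=
  TensorProduct.map m LinearMap.id ∘ₗ (TensorProduct.assoc K A A A).symm.toLinearMap

/-- `id ⊗ m : A ⊗ (A ⊗ A) → A ⊗ A`. -/
def mulR {K : Type*} [Field K] {A : Type*} [AddCommGroup A] [Module K A]
    (m : A ⊗[K] A →ₗ[K] A) : A ⊗[K] (A ⊗[K] A) →ₗ[K] A ⊗[K] A :=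
  TensorProduct.map LinearMap.id m

/-- Associativity of a multiplication given as a linear map on the tensor square:
`m(m ⊗ id) = m(id ⊗ m)`. -/
def IsAssocMul {K : Type*} [Field K] {A : Type*} [AddCommGroup A] [Module K A]
    (m : A ⊗[K] A →ₗ[K] A) : Prop :=
  m ∘ₗ mulL m = m ∘ₗ mulR m

/-- A braided algebra: an associative multiplication and a braiding satisfying
`(id ⊗ m)σ₁σ₂ = σ(m ⊗ id)` and `(m ⊗ id)σ₂σ₁ = σ(id ⊗ m)`. -/
def IsBraidedAlgebra {K : Type*} [Field K] {A : Type*} [AddCommGroup A] [Module K A]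
    (m : A ⊗[K] A →ₗ[K] A) (σ : A ⊗[K] A →ₗ[K] A ⊗[K] A) : Prop :=
  IsAssocMul m ∧ IsBraiding σ ∧
    mulR m ∘ₗ braid1 σ ∘ₗ braid2 σ = σ ∘ₗ mulL m ∧
    mulL m ∘ₗ braid2 σ ∘ₗ braid1 σ = σ ∘ₗ mulR m

/-- the only associative multiplication on the 2-dimensional space `V` that is
compatible (in the braided-algebra sense) with the Hecke-type braiding `σ` is the trivial
one `m = 0`. -/
theorem hecke_braiding_only_trivial_mul (K : Type*) [Field K] [CharZero K] (q : K)
    (hq0 : q ≠ 0) (hq1 : q ^ 2 ≠ 1)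
    (V : Type*) [AddCommGroup V] [Module K V] (e : Module.Basis (Fin 2) K V)
    (σ : V ⊗[K] V →ₗ[K] V ⊗[K] V)
    (h11 : σ (e 0 ⊗ₜ[K] e 0) = e 0 ⊗ₜ[K] e 0)
    (h12 : σ (e 0 ⊗ₜ[K] e 1) = q • (e 1 ⊗ₜ[K] e 0))
    (h21 : σ (e 1 ⊗ₜ[K] e 0) = q • (e 0 ⊗ₜ[K] e 1) + (1 - q ^ 2) • (e 1 ⊗ₜ[K] e 0))
    (h22 : σ (e 1 ⊗ₜ[K] e 1) = e 1 ⊗ₜ[K] e 1)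
    (m : V ⊗[K] V →ₗ[K] V) (hm : IsAssocMul m)
    (hc1 : mulR m ∘ₗ braid1 σ ∘ₗ braid2 σ = σ ∘ₗ mulL m)
    (hc2 : mulL m ∘ₗ braid2 σ ∘ₗ braid1 σ = σ ∘ₗ mulR m) :
    m = 0 := by
  set a : Fin 2 → Fin 2 → Fin 2 → K := fun i j k => e.repr (m (e i ⊗ₜ[K] e j)) k with ha_def
  have ha : ∀ i j : Fin 2, m (e i ⊗ₜ[K] e j) = a i j 0 • e 0 + a i j 1 • e 1 := by
    intro i j
    have := e.sum_repr (m (e i ⊗ₜ[K] e j))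
    rw [Fin.sum_univ_two] at this
    exact this.symm
  have hq1' : q - 1 ≠ 0 := by
    intro h
    exact hq1 (by rw [sub_eq_zero.mp h]; ring)
  have hqm1 : q + 1 ≠ 0 := by
    intro h
    have hq : q = -1 := eq_neg_of_add_eq_zero_left h
    exact hq1 (by rw [hq]; ring)
  have E1 := LinearMap.congr_fun hc1 (e 0 ⊗ₜ[K] (e 0 ⊗ₜ[K] e 1))
  have E2 := LinearMap.congr_fun hc2 (e 0 ⊗ₜ[K] (e 0 ⊗ₜ[K] e 1))
  have E3 := LinearMap.congr_fun hc1 (e 0 ⊗ₜ[K] (e 1 ⊗ₜ[K] e 1))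
  have E4 := LinearMap.congr_fun hc1 (e 1 ⊗ₜ[K] (e 0 ⊗ₜ[K] e 0))
  have E5 := LinearMap.congr_fun hc2 (e 0 ⊗ₜ[K] (e 1 ⊗ₜ[K] e 1))
  simp only [mulR, mulL, braid1, braid2, LinearMap.comp_apply, LinearEquiv.coe_coe,
    TensorProduct.map_tmul, LinearMap.id_coe, id_eq, h11, h12, h21, h22,
    TensorProduct.assoc_tmul, TensorProduct.assoc_symm_tmul, tmul_smul, smul_tmul,
    map_add, map_smul, ha, tmul_add, add_tmul, smul_add, smul_smul] at E1 E2 E3 E4 E5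
  have E1a := congrArg (fun x => (Module.Basis.tensorProduct e e).repr x (1,0)) E1
  have E1b := congrArg (fun x => (Module.Basis.tensorProduct e e).repr x (1,1)) E1
  have E2a := congrArg (fun x => (Module.Basis.tensorProduct e e).repr x (0,0)) E2
  have E3a := congrArg (fun x => (Module.Basis.tensorProduct e e).repr x (1,1)) E3
  have E4a := congrArg (fun x => (Module.Basis.tensorProduct e e).repr x (0,0)) E4
  have E4b := congrArg (fun x => (Module.Basis.tensorProduct e e).repr x (1,0)) E4
  have E5a := congrArg (fun x => (Module.Basis.tensorProduct e e).repr x (0,0)) E5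
  have E5b := congrArg (fun x => (Module.Basis.tensorProduct e e).repr x (1,0)) E5
  simp only [map_add, map_smul, Module.Basis.tensorProduct_repr_tmul_apply, Module.Basis.repr_self,
    Finsupp.add_apply, Finsupp.smul_apply, Finsupp.single_apply, smul_eq_mul] at E1a E1b E2a E3a E4a E4b E5a E5b
  norm_num at E1a E1b E2a E3a E4a E4b E5a E5b
  have h000 : a 0 0 0 = 0 := by
    have h : (q * (q - 1)) * a 0 0 0 = 0 := by linear_combination E1a
    exact (mul_eq_zero.mp h).resolve_left (mul_ne_zero hq0 hq1')
  have h001 : a 0 0 1 = 0 := by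
    have h : ((q - 1) * (q + 1)) * a 0 0 1 = 0 := by linear_combination E1b
    exact (mul_eq_zero.mp h).resolve_left (mul_ne_zero hq1' hqm1)
  have h010 : a 0 1 0 = 0 := by
    have h : (q - 1) * a 0 1 0 = 0 := by linear_combination E2a
    exact (mul_eq_zero.mp h).resolve_left hq1'
  have h011 : a 0 1 1 = 0 := by
    have h : (q - 1) * a 0 1 1 = 0 := by linear_combination E3a
    exact (mul_eq_zero.mp h).resolve_left hq1'
  have h100 : a 1 0 0 = 0 := by
    have h : (q - 1) * a 1 0 0 = 0 := by linear_combination E4a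
    exact (mul_eq_zero.mp h).resolve_left hq1'
  have h101 : a 1 0 1 = 0 := by
    have h : ((q - 1) * (q + 1)) * a 1 0 1 = 0 := by
      linear_combination E4b - (1 - q ^ 2) * h000
    exact (mul_eq_zero.mp h).resolve_left (mul_ne_zero hq1' hqm1)
  have h110 : a 1 1 0 = 0 := by
    have h : ((q - 1) * (q + 1)) * a 1 1 0 = 0 := by linear_combination E5a
    exact (mul_eq_zero.mp h).resolve_left (mul_ne_zero hq1' hqm1)
  have h111 : a 1 1 1 = 0 := by
    have h : (q * (q - 1)) * a 1 1 1 = 0 := by linear_combination E5b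
    exact (mul_eq_zero.mp h).resolve_left (mul_ne_zero hq0 hq1')
  have hall : ∀ i j : Fin 2, m (e i ⊗ₜ[K] e j) = 0 := by
    intro i j
    fin_cases i <;> fin_cases j <;> rw [ha] <;>
      simp [h000, h001, h010, h011, h100, h101, h110, h111]
  refine (Module.Basis.tensorProduct e e).ext fun p => ?_
  obtain ⟨i, j⟩ := p
  rw [Module.Basis.tensorProduct_apply]
  simp [hall]
end
end

section
/- Let K be a field of characteristic 0, q ∈ K with q ≠ 0 and q² ≠ 1, and let V be the 2-dimensional K-vector space with basis {e₁, e₂}. Let σ' : V ⊗ V → V ⊗ V be the linear map defined by σ'(e_i ⊗ e_j) = q·e_j ⊗ e_i for all i, j ∈ {1, 2}. Then σ' is a braiding on V, and if m : V ⊗ V → V is any associative multiplication on V satisfying the braided algebra compatibilities (id_V ⊗ m)σ'₁σ'₂ = σ'(m ⊗ id_V) and (m ⊗ id_V)σ'₂σ'₁ = σ'(id_V ⊗ m) on V ⊗ V ⊗ V, then m = 0. -/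
open TensorProduct

noncomputable section

/-- the rescaled flip `σ'(e_i ⊗ e_j) = q (e_j ⊗ e_i)` on the 2-dimensional
space `V` is a braiding, and the only associative multiplication on `V` compatible with it
(in the braided-algebra sense) is the trivial one `m = 0`. -/
theorem scaled_flip_braiding_only_trivial_mul (K : Type*) [Field K] [CharZero K] (q : K)
    (hq0 : q ≠ 0) (hq1 : q ^ 2 ≠ 1)
    (V : Type*) [AddCommGroup V] [Module K V] (e : Module.Basis (Fin 2) K V)
    (σ' : V ⊗[K] V →ₗ[K] V ⊗[K] V)
    (hσ' : ∀ i j : Fin 2, σ' (e i ⊗ₜ[K] e j) = q • (e j ⊗ₜ[K] e i)) :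
    IsBraiding σ' ∧
      ∀ m : V ⊗[K] V →ₗ[K] V, IsAssocMul m →
        mulR m ∘ₗ braid1 σ' ∘ₗ braid2 σ' = σ' ∘ₗ mulL m →
        mulL m ∘ₗ braid2 σ' ∘ₗ braid1 σ' = σ' ∘ₗ mulR m →
        m = 0 := by
  have hq1' : q ≠ 1 := by rintro rfl; simp at hq1
  -- computations of braid1 and braid2 on basis tensors
  have b1 : ∀ i j k : Fin 2, braid1 σ' (e i ⊗ₜ[K] (e j ⊗ₜ[K] e k))
      = q • (e j ⊗ₜ[K] (e i ⊗ₜ[K] e k)) := by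
    intro i j k
    simp [braid1, hσ', TensorProduct.smul_tmul']
  have b2 : ∀ i j k : Fin 2, braid2 σ' (e i ⊗ₜ[K] (e j ⊗ₜ[K] e k))
      = q • (e i ⊗ₜ[K] (e k ⊗ₜ[K] e j)) := by
    intro i j k
    simp [braid2, hσ']
  -- σ' is q • comm
  have hσc : ∀ x : V ⊗[K] V, σ' x = q • (TensorProduct.comm K V V) x := by
    have : σ' = q • (TensorProduct.comm K V V).toLinearMap := by
      apply (Module.Basis.tensorProduct e e).ext
      rintro ⟨i, j⟩
      simp [Module.Basis.tensorProduct_apply, hσ']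
    intro x; rw [this]; rfl
  have hbij : Function.Bijective σ' := by
    have : σ' = ((TensorProduct.comm K V V) ≪≫ₗ
        LinearEquiv.smulOfNeZero K (V ⊗[K] V) q hq0).toLinearMap := by
      ext x
      simp [hσc, LinearEquiv.smulOfNeZero, LinearEquiv.smulOfUnit, Units.smul_def,
        DistribMulAction.toLinearEquiv]
    rw [this]
    exact LinearEquiv.bijective _
  have hybe : braid1 σ' ∘ₗ braid2 σ' ∘ₗ braid1 σ' = braid2 σ' ∘ₗ braid1 σ' ∘ₗ braid2 σ' := by
    apply (Module.Basis.tensorProduct e (Module.Basis.tensorProduct e e)).ext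
    rintro ⟨i, j, k⟩
    simp [Module.Basis.tensorProduct_apply, b1, b2, smul_smul, mul_comm, mul_left_comm]
  refine ⟨⟨hbij, hybe⟩, ?_⟩
  intro m _ h1 _
  have key : ∀ i j : Fin 2, m (e i ⊗ₜ[K] e j) = 0 := by
    intro i j
    have h := LinearMap.congr_fun h1 (e i ⊗ₜ[K] (e j ⊗ₜ[K] e 0))
    simp only [LinearMap.coe_comp, Function.comp_apply] at h
    simp only [b2, b1, map_smul] at h
    have hR : mulR m (e 0 ⊗ₜ[K] (e i ⊗ₜ[K] e j)) = e 0 ⊗ₜ[K] m (e i ⊗ₜ[K] e j) := by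
      simp [mulR]
    have hL : mulL m (e i ⊗ₜ[K] (e j ⊗ₜ[K] e 0)) = m (e i ⊗ₜ[K] e j) ⊗ₜ[K] e 0 := by
      simp [mulL]
    rw [hR, hL, hσc] at h
    simp only [TensorProduct.comm_tmul, smul_smul] at h
    -- h : (q * q) • (e 0 ⊗ₜ m (e i ⊗ₜ e j)) = q • (e 0 ⊗ₜ m (e i ⊗ₜ e j))
    have h0 : (q * q - q) • (e 0 ⊗ₜ[K] m (e i ⊗ₜ[K] e j)) = 0 := by
      rw [sub_smul, h, sub_self]
    have hne : q * q - q ≠ 0 := by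
      intro hc
      have hz : q * (q - 1) = 0 := by linear_combination hc
      rcases mul_eq_zero.mp hz with h' | h'
      · exact hq0 h'
      · exact hq1' (sub_eq_zero.mp h')
    have htz : (e 0 : V) ⊗ₜ[K] m (e i ⊗ₜ[K] e j) = 0 := by
      have := smul_eq_zero.mp h0
      tauto
    -- extract: apply coord 0 ⊗ id
    have := congrArg (fun z => (TensorProduct.lid K V).toLinearMap.comp
      (TensorProduct.map (e.coord 0) LinearMap.id) z) htz
    simpa using this
  apply (Module.Basis.tensorProduct e e).ext
  rintro ⟨i, j⟩
  simp [Module.Basis.tensorProduct_apply, key]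
end
end

section
/- Let K be a field of characteristic 0 and (A, m, σ) a braided algebra over K. Set Ã = K ⊕ A (the unitalization of A as a vector space) and define m̃ : Ã ⊗ Ã → Ã and σ̃ : Ã ⊗ Ã → Ã ⊗ Ã by m̃((λ + a) ⊗ (μ + b)) = λμ + λ·b + μ·a + m(a ⊗ b) and σ̃((λ + a) ⊗ (μ + b)) = (μ + b) ⊗ λ + μ ⊗ a + σ(a ⊗ b), for λ, μ ∈ K and a, b ∈ A. Then (Ã, m̃, σ̃) is a unital braided algebra with unit 1 ∈ K: m̃ is associative with unit 1, σ̃ is a braiding on Ã, the compatibilities (id ⊗ m̃)σ̃₁σ̃₂ = σ̃(m̃ ⊗ id) and (m̃ ⊗ id)σ̃₂σ̃₁ = σ̃(id ⊗ m̃) hold, and σ̃(x ⊗ 1) = 1 ⊗ x and σ̃(1 ⊗ x) = x ⊗ 1 for all x ∈ Ã. -/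
open TensorProduct

set_option maxHeartbeats 1600000
set_option synthInstance.maxHeartbeats 200000

noncomputable section

section Aux

variable {K : Type*} [Field K] {A : Type*} [AddCommGroup A] [Module K A]

lemma braid1_tmul (σ : A ⊗[K] A →ₗ[K] A ⊗[K] A) (x y z : A) :
    braid1 σ (x ⊗ₜ[K] (y ⊗ₜ[K] z)) = TensorProduct.assoc K A A A (σ (x ⊗ₜ y) ⊗ₜ z) := by
  simp [braid1]

lemma braid2_tmul (σ : A ⊗[K] A →ₗ[K] A ⊗[K] A) (x : A) (w : A ⊗[K] A) :
    braid2 σ (x ⊗ₜ[K] w) = x ⊗ₜ σ w := by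
  simp [braid2]

lemma mulL_tmul (m : A ⊗[K] A →ₗ[K] A) (x y z : A) :
    mulL m (x ⊗ₜ[K] (y ⊗ₜ[K] z)) = m (x ⊗ₜ y) ⊗ₜ z := by
  simp [mulL]

lemma mulR_tmul (m : A ⊗[K] A →ₗ[K] A) (x : A) (w : A ⊗[K] A) :
    mulR m (x ⊗ₜ[K] w) = x ⊗ₜ m w := by
  simp [mulR]

/-- Splitting principle: to prove two linear maps on `(K×A) ⊗ ((K×A) ⊗ (K×A))` agree,
it is enough to check the four "component" cases. -/
lemma split_ext {W : Type*} [AddCommMonoid W] [Module K W]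
    (F G : (K × A) ⊗[K] ((K × A) ⊗[K] (K × A)) →ₗ[K] W)
    (hA : ∀ (l : K) (q r : K × A), F (((l, 0) : K × A) ⊗ₜ (q ⊗ₜ r)) = G (((l, 0) : K × A) ⊗ₜ (q ⊗ₜ r)))
    (hB : ∀ (a : A) (mu : K) (r : K × A),
      F (((0, a) : K × A) ⊗ₜ (((mu, 0) : K × A) ⊗ₜ r)) = G (((0, a) : K × A) ⊗ₜ (((mu, 0) : K × A) ⊗ₜ r)))
    (hC : ∀ (a b : A) (nu : K),
      F (((0, a) : K × A) ⊗ₜ (((0, b) : K × A) ⊗ₜ ((nu, 0) : K × A))) =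
        G (((0, a) : K × A) ⊗ₜ (((0, b) : K × A) ⊗ₜ ((nu, 0) : K × A))))
    (hD : ∀ a b c : A,
      F (((0, a) : K × A) ⊗ₜ (((0, b) : K × A) ⊗ₜ ((0, c) : K × A))) =
        G (((0, a) : K × A) ⊗ₜ (((0, b) : K × A) ⊗ₜ ((0, c) : K × A)))) :
    F = G := by
  apply TensorProduct.ext'
  intro p w
  induction w using TensorProduct.induction_on with
  | zero => simp
  | add u v hu hv => simp [tmul_add, hu, hv]
  | tmul q r =>
    have hsp : ∀ x : K × A, x = ((x.1, 0) : K × A) + ((0, x.2) : K × A) := by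
      intro x; ext <;> simp
    rw [hsp p, hsp q, hsp r]
    simp only [add_tmul, tmul_add, map_add]
    rw [hA, hA, hA, hA, hB, hB, hC, hD]

end Aux

/-- the unitalization `Ã = K ⊕ A` of a braided algebra `(A, m, σ)`, with the
multiplication `m̃` and braiding `σ̃` defined in the natural way, is a unital braided algebra
with unit `1 ∈ K`. Elements of `K ⊕ A` are written as pairs `(lam, a)` standing for `lam + a`. -/
theorem unitalization_isUnitalBraidedAlgebra (K : Type*) [Field K] [CharZero K]
    (A : Type*) [AddCommGroup A] [Module K A]
    (m : A ⊗[K] A →ₗ[K] A) (σ : A ⊗[K] A →ₗ[K] A ⊗[K] A)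
    (hbraided : IsBraidedAlgebra m σ)
    (mt : (K × A) ⊗[K] (K × A) →ₗ[K] K × A)
    (st : (K × A) ⊗[K] (K × A) →ₗ[K] (K × A) ⊗[K] (K × A))
    (hmt : ∀ p q : K × A,
      mt (p ⊗ₜ[K] q) = (p.1 * q.1, p.1 • q.2 + q.1 • p.2 + m (p.2 ⊗ₜ[K] q.2)))
    (hst : ∀ p q : K × A,
      st (p ⊗ₜ[K] q) =
        q ⊗ₜ[K] ((p.1, 0) : K × A) + ((q.1, 0) : K × A) ⊗ₜ[K] ((0, p.2) : K × A) +
          TensorProduct.map (LinearMap.inr K K A) (LinearMap.inr K K A) (σ (p.2 ⊗ₜ[K] q.2))) :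
    IsBraidedAlgebra mt st ∧
      (∀ x : K × A,
        mt (((1, 0) : K × A) ⊗ₜ[K] x) = x ∧
        mt (x ⊗ₜ[K] ((1, 0) : K × A)) = x ∧
        st (x ⊗ₜ[K] ((1, 0) : K × A)) = ((1, 0) : K × A) ⊗ₜ[K] x ∧
        st (((1, 0) : K × A) ⊗ₜ[K] x) = x ⊗ₜ[K] ((1, 0) : K × A)) := by
  obtain ⟨hm, ⟨hσbij, hybe⟩, hc1, hc2⟩ := hbraided
  set J : A ⊗[K] A →ₗ[K] (K × A) ⊗[K] (K × A) :=
    TensorProduct.map (LinearMap.inr K K A) (LinearMap.inr K K A) with hJ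
  set J3 : A ⊗[K] (A ⊗[K] A) →ₗ[K] (K × A) ⊗[K] ((K × A) ⊗[K] (K × A)) :=
    TensorProduct.map (LinearMap.inr K K A)
      (TensorProduct.map (LinearMap.inr K K A) (LinearMap.inr K K A)) with hJ3
  have hsp : ∀ x : K × A, ((x.1, 0) : K × A) + ((0, x.2) : K × A) = x := by
    intro x; ext <;> simp
  -- basic evaluation lemmas
  have st_el : ∀ (l : K) (q : K × A), st (((l, 0) : K × A) ⊗ₜ[K] q) = q ⊗ₜ[K] ((l, 0) : K × A) := by
    intro l q; simp [hst, Prod.mk_zero_zero]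
  have st_er : ∀ (p : K × A) (l : K), st (p ⊗ₜ[K] ((l, 0) : K × A)) = ((l, 0) : K × A) ⊗ₜ[K] p := by
    intro p l
    rw [hst]
    simp only [tmul_zero, map_zero, add_zero]
    rw [← tmul_add, hsp]
  have st_ii : ∀ a b : A, st (((0, a) : K × A) ⊗ₜ[K] ((0, b) : K × A)) = J (σ (a ⊗ₜ b)) := by
    intro a b; simp [hst, hJ, Prod.mk_zero_zero]
  have mt_el : ∀ (l : K) (q : K × A), mt (((l, 0) : K × A) ⊗ₜ[K] q) = l • q := by
    intro l q
    refine Prod.ext ?_ ?_ <;> simp [hmt]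
  have mt_er : ∀ (p : K × A) (l : K), mt (p ⊗ₜ[K] ((l, 0) : K × A)) = l • p := by
    intro p l
    refine Prod.ext ?_ ?_ <;> simp [hmt, mul_comm]
  have mt_ii : ∀ a b : A, mt (((0, a) : K × A) ⊗ₜ[K] ((0, b) : K × A)) = (0, m (a ⊗ₜ b)) := by
    intro a b; simp [hmt]
  -- helper lemmas proved by induction on a general element of the tensor square
  have Hb1e : ∀ (l : K) (w : (K × A) ⊗[K] (K × A)),
      braid1 st (((l, 0) : K × A) ⊗ₜ[K] w) =
        TensorProduct.map LinearMap.id (TensorProduct.mk K (K × A) (K × A) ((l, 0) : K × A)) w := by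
    intro l w
    induction w using TensorProduct.induction_on with
    | zero => simp
    | add u v hu hv => simp [tmul_add, hu, hv]
    | tmul u v => simp [braid1_tmul, st_el, assoc_tmul, map_tmul, mk_apply]
  have Hb2mk : ∀ (l : K) (w : (K × A) ⊗[K] (K × A)),
      braid2 st (TensorProduct.map LinearMap.id (TensorProduct.mk K (K × A) (K × A) ((l, 0) : K × A)) w) =
        TensorProduct.assoc K (K × A) (K × A) (K × A) (w ⊗ₜ[K] ((l, 0) : K × A)) := by
    intro l w
    induction w using TensorProduct.induction_on with
    | zero => simp
    | add u v hu hv => simp [tmul_add, add_tmul, hu, hv]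
    | tmul u v => simp [braid2_tmul, st_el, assoc_tmul, map_tmul, mk_apply]
  have Hb2assoc : ∀ (l : K) (w : (K × A) ⊗[K] (K × A)),
      braid2 st (TensorProduct.assoc K (K × A) (K × A) (K × A) (w ⊗ₜ[K] ((l, 0) : K × A))) =
        TensorProduct.map LinearMap.id (TensorProduct.mk K (K × A) (K × A) ((l, 0) : K × A)) w := by
    intro l w
    induction w using TensorProduct.induction_on with
    | zero => simp
    | add u v hu hv => simp [tmul_add, add_tmul, hu, hv]
    | tmul u v => simp [braid2_tmul, st_er, assoc_tmul, map_tmul, mk_apply]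
  have Hb1mk : ∀ (l : K) (w : (K × A) ⊗[K] (K × A)),
      braid1 st (TensorProduct.map LinearMap.id (TensorProduct.mk K (K × A) (K × A) ((l, 0) : K × A)) w) =
        ((l, 0) : K × A) ⊗ₜ[K] w := by
    intro l w
    induction w using TensorProduct.induction_on with
    | zero => simp
    | add u v hu hv => simp [tmul_add, hu, hv]
    | tmul u v => simp [braid1_tmul, st_er, assoc_tmul, map_tmul, mk_apply]
  have H4 : ∀ (l : K) (w : (K × A) ⊗[K] (K × A)),
      mulR mt (TensorProduct.map LinearMap.id (TensorProduct.mk K (K × A) (K × A) ((l, 0) : K × A)) w) =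
        l • w := by
    intro l w
    induction w using TensorProduct.induction_on with
    | zero => simp
    | add u v hu hv => simp [tmul_add, hu, hv]
    | tmul u v => simp [mulR_tmul, mt_el, map_tmul, mk_apply, tmul_smul]
  have H5 : ∀ (l : K) (w : (K × A) ⊗[K] (K × A)),
      mulR mt (TensorProduct.assoc K (K × A) (K × A) (K × A) (w ⊗ₜ[K] ((l, 0) : K × A))) = l • w := by
    intro l w
    induction w using TensorProduct.induction_on with
    | zero => simp
    | add u v hu hv => simp [add_tmul, hu, hv]
    | tmul u v => simp [mulR_tmul, mt_er, assoc_tmul, tmul_smul]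
  have H6 : ∀ (l : K) (w : (K × A) ⊗[K] (K × A)),
      mulL mt (((l, 0) : K × A) ⊗ₜ[K] w) = l • w := by
    intro l w
    induction w using TensorProduct.induction_on with
    | zero => simp
    | add u v hu hv => simp [tmul_add, hu, hv]
    | tmul u v => simp [mulL_tmul, mt_el, smul_tmul']
  have H7 : ∀ (l : K) (w : (K × A) ⊗[K] (K × A)),
      mulL mt (TensorProduct.map LinearMap.id (TensorProduct.mk K (K × A) (K × A) ((l, 0) : K × A)) w) =
        l • w := by
    intro l w
    induction w using TensorProduct.induction_on with
    | zero => simp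
    | add u v hu hv => simp [tmul_add, hu, hv]
    | tmul u v => simp [mulL_tmul, mt_er, map_tmul, mk_apply, smul_tmul']
  -- intertwining lemmas with the inclusion J
  have OJst : ∀ v : A ⊗[K] A, st (J v) = J (σ v) := by
    intro v
    induction v using TensorProduct.induction_on with
    | zero => simp
    | add u v hu hv => simp [hu, hv]
    | tmul a b => simp [hJ, st_ii]
  have OJmt : ∀ v : A ⊗[K] A, mt (J v) = (0, m v) := by
    intro v
    induction v using TensorProduct.induction_on with
    | zero => simp [Prod.mk_zero_zero]
    | add u v hu hv => simp [map_add, hu, hv, Prod.mk_add_mk]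
    | tmul a b => simp [hJ, mt_ii]
  have N1 : ∀ (u : A ⊗[K] A) (c : A),
      TensorProduct.assoc K (K × A) (K × A) (K × A) (J u ⊗ₜ[K] ((0, c) : K × A)) =
        J3 (TensorProduct.assoc K A A A (u ⊗ₜ[K] c)) := by
    intro u c
    induction u using TensorProduct.induction_on with
    | zero => simp
    | add u v hu hv => simp [add_tmul, hu, hv]
    | tmul x y => simp [hJ, hJ3, assoc_tmul]
  have OJ3b1 : ∀ v : A ⊗[K] (A ⊗[K] A), braid1 st (J3 v) = J3 (braid1 σ v) := by
    intro v
    induction v using TensorProduct.induction_on with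
    | zero => simp
    | add u v hu hv => simp [hu, hv]
    | tmul a w =>
      induction w using TensorProduct.induction_on with
      | zero => simp
      | add u v hu hv => simp [tmul_add, hu, hv]
      | tmul b c =>
        have e1 : J3 (a ⊗ₜ[K] (b ⊗ₜ[K] c)) = ((0, a) : K × A) ⊗ₜ[K] (((0, b) : K × A) ⊗ₜ[K] ((0, c) : K × A)) := by
          simp [hJ3]
        rw [e1, braid1_tmul, st_ii, braid1_tmul, N1]
  have OJ3b2 : ∀ v : A ⊗[K] (A ⊗[K] A), braid2 st (J3 v) = J3 (braid2 σ v) := by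
    intro v
    induction v using TensorProduct.induction_on with
    | zero => simp
    | add u v hu hv => simp [hu, hv]
    | tmul a w =>
      have e1 : J3 (a ⊗ₜ[K] w) = ((0, a) : K × A) ⊗ₜ[K] (J w) := by simp [hJ3, hJ]
      have e2 : J3 (braid2 σ (a ⊗ₜ[K] w)) = ((0, a) : K × A) ⊗ₜ[K] (J (σ w)) := by
        rw [braid2_tmul]; simp [hJ3, hJ]
      rw [e1, braid2_tmul, OJst, e2]
  have OJmulR : ∀ v : A ⊗[K] (A ⊗[K] A), mulR mt (J3 v) = J (mulR m v) := by
    intro v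
    induction v using TensorProduct.induction_on with
    | zero => simp
    | add u v hu hv => simp [hu, hv]
    | tmul a w =>
      have e1 : J3 (a ⊗ₜ[K] w) = ((0, a) : K × A) ⊗ₜ[K] (J w) := by simp [hJ3, hJ]
      rw [e1, mulR_tmul, OJmt, mulR_tmul]
      simp [hJ]
  have OJmulL : ∀ v : A ⊗[K] (A ⊗[K] A), mulL mt (J3 v) = J (mulL m v) := by
    intro v
    induction v using TensorProduct.induction_on with
    | zero => simp
    | add u v hu hv => simp [hu, hv]
    | tmul a w =>
      induction w using TensorProduct.induction_on with
      | zero => simp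
      | add u v hu hv => simp [tmul_add, hu, hv]
      | tmul b c =>
        have e1 : J3 (a ⊗ₜ[K] (b ⊗ₜ[K] c)) = ((0, a) : K × A) ⊗ₜ[K] (((0, b) : K × A) ⊗ₜ[K] ((0, c) : K × A)) := by
          simp [hJ3]
        rw [e1, mulL_tmul, mt_ii, mulL_tmul]
        simp [hJ]
  -- elementwise versions of the hypotheses on (m, σ)
  have hassoc_el : ∀ a b c : A, m (m (a ⊗ₜ b) ⊗ₜ c) = m (a ⊗ₜ m (b ⊗ₜ c)) := by
    intro a b c
    have := LinearMap.congr_fun hm (a ⊗ₜ[K] (b ⊗ₜ[K] c))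
    simpa [mulL_tmul, mulR_tmul] using this
  have hybe' : ∀ v : A ⊗[K] (A ⊗[K] A),
      braid1 σ (braid2 σ (braid1 σ v)) = braid2 σ (braid1 σ (braid2 σ v)) := by
    intro v; simpa using LinearMap.congr_fun hybe v
  have hc1' : ∀ v : A ⊗[K] (A ⊗[K] A), mulR m (braid1 σ (braid2 σ v)) = σ (mulL m v) := by
    intro v; simpa using LinearMap.congr_fun hc1 v
  have hc2' : ∀ v : A ⊗[K] (A ⊗[K] A), mulL m (braid2 σ (braid1 σ v)) = σ (mulR m v) := by
    intro v; simpa using LinearMap.congr_fun hc2 v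
  have smulL : ∀ (c : K) (x y : K × A), (c • x) ⊗ₜ[K] y = c • (x ⊗ₜ[K] y) :=
    fun c x y => (smul_tmul' c x y).symm
  have inr_smul : ∀ (c : K) (a : A) (y : K × A),
      ((0, c • a) : K × A) ⊗ₜ[K] y = c • (((0, a) : K × A) ⊗ₜ[K] y) := by
    intro c a y
    rw [show ((0, c • a) : K × A) = c • ((0, a) : K × A) by ext <;> simp, smulL]
  have inr_smul_r : ∀ (c : K) (a : A) (x : K × A),
      x ⊗ₜ[K] ((0, c • a) : K × A) = c • (x ⊗ₜ[K] ((0, a) : K × A)) := by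
    intro c a x
    rw [show ((0, c • a) : K × A) = c • ((0, a) : K × A) by ext <;> simp, tmul_smul]
  -- associativity of mt
  have hassoc_mt : IsAssocMul mt := by
    apply split_ext
    · intro l q r
      simp [LinearMap.comp_apply, mulL_tmul, mulR_tmul, mt_el, smulL, map_smul]
    · intro a mu r
      simp [LinearMap.comp_apply, mulL_tmul, mulR_tmul, mt_el, mt_er, smulL, tmul_smul, map_smul,
        inr_smul, inr_smul_r]
    · intro a b nu
      simp [LinearMap.comp_apply, mulL_tmul, mulR_tmul, mt_el, mt_er, smulL, tmul_smul, map_smul,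
        inr_smul, inr_smul_r]
    · intro a b c
      simp [LinearMap.comp_apply, mulL_tmul, mulR_tmul, mt_ii, hassoc_el]
  -- Yang-Baxter for st
  have hYBE : braid1 st ∘ₗ braid2 st ∘ₗ braid1 st = braid2 st ∘ₗ braid1 st ∘ₗ braid2 st := by
    apply split_ext
    · intro l q r
      simp [LinearMap.comp_apply, braid1_tmul, braid2_tmul, st_el, st_er, assoc_tmul, Hb1e, Hb2mk]
    · intro a mu r
      simp [LinearMap.comp_apply, braid1_tmul, braid2_tmul, st_el, st_er, assoc_tmul, Hb1e,
        Hb2assoc]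
    · intro a b nu
      simp [LinearMap.comp_apply, braid1_tmul, braid2_tmul, st_el, st_er, st_ii, assoc_tmul,
        Hb2assoc, Hb1mk]
    · intro a b c
      have e1 : ((0, a) : K × A) ⊗ₜ[K] (((0, b) : K × A) ⊗ₜ[K] ((0, c) : K × A)) =
          J3 (a ⊗ₜ[K] (b ⊗ₜ[K] c)) := by simp [hJ3]
      simp only [LinearMap.comp_apply, e1, OJ3b1, OJ3b2, hybe']
  -- first compatibility
  have hC1 : mulR mt ∘ₗ braid1 st ∘ₗ braid2 st = st ∘ₗ mulL mt := by
    apply split_ext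
    · intro l q r
      simp [LinearMap.comp_apply, braid2_tmul, Hb1e, H4, mulL_tmul, mt_el, smulL, map_smul,
        inr_smul, inr_smul_r]
    · intro a mu r
      simp [LinearMap.comp_apply, braid2_tmul, braid1_tmul, st_el, H5, mulL_tmul, mt_er, smulL,
        map_smul, inr_smul, inr_smul_r]
    · intro a b nu
      simp [LinearMap.comp_apply, braid2_tmul, braid1_tmul, st_er, mulR_tmul, mulL_tmul, mt_ii,
        assoc_tmul]
    · intro a b c
      have e1 : ((0, a) : K × A) ⊗ₜ[K] (((0, b) : K × A) ⊗ₜ[K] ((0, c) : K × A)) =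
          J3 (a ⊗ₜ[K] (b ⊗ₜ[K] c)) := by simp [hJ3]
      simp only [LinearMap.comp_apply, e1, OJ3b2, OJ3b1, OJmulR, OJmulL, hc1', OJst]
  -- second compatibility
  have hC2 : mulL mt ∘ₗ braid2 st ∘ₗ braid1 st = st ∘ₗ mulR mt := by
    apply split_ext
    · intro l q r
      simp [LinearMap.comp_apply, braid1_tmul, braid2_tmul, st_el, assoc_tmul, mulL_tmul,
        mulR_tmul]
    · intro a mu r
      simp [LinearMap.comp_apply, braid1_tmul, braid2_tmul, mulR_tmul, st_er, assoc_tmul, H6,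
        mt_el, tmul_smul, map_smul, inr_smul, inr_smul_r]
    · intro a b nu
      simp [LinearMap.comp_apply, braid1_tmul, braid2_tmul, mulR_tmul, st_ii, Hb2assoc, H7, mt_er,
        tmul_smul, map_smul, inr_smul, inr_smul_r]
    · intro a b c
      have e1 : ((0, a) : K × A) ⊗ₜ[K] (((0, b) : K × A) ⊗ₜ[K] ((0, c) : K × A)) =
          J3 (a ⊗ₜ[K] (b ⊗ₜ[K] c)) := by simp [hJ3]
      simp only [LinearMap.comp_apply, e1, OJ3b1, OJ3b2, OJmulL, OJmulR, hc2', OJst]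
  -- bijectivity of st
  set σE : A ⊗[K] A ≃ₗ[K] A ⊗[K] A := LinearEquiv.ofBijective σ hσbij with hσE
  have e' : ∀ v : A ⊗[K] A, σE v = σ v := by intro v; simp [hσE]
  have hσ'σ : ∀ u : A ⊗[K] A, σE.symm (σ u) = u := by
    intro u; rw [← e', LinearEquiv.symm_apply_apply]
  have hσσ' : ∀ u : A ⊗[K] A, σ (σE.symm.toLinearMap u) = u := by
    intro u
    rw [show σE.symm.toLinearMap u = σE.symm u from rfl, ← e', LinearEquiv.apply_symm_apply]
  obtain ⟨T, hT⟩ : ∃ T : (K × A) ⊗[K] (K × A) →ₗ[K] (K × A) ⊗[K] (K × A),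
      ∀ p q : K × A, T (p ⊗ₜ[K] q) =
        q ⊗ₜ[K] ((p.1, 0) : K × A) + ((q.1, 0) : K × A) ⊗ₜ[K] ((0, p.2) : K × A) +
          J (σE.symm.toLinearMap (p.2 ⊗ₜ[K] q.2)) := by
    refine ⟨TensorProduct.map LinearMap.id (LinearMap.inl K K A ∘ₗ LinearMap.fst K K A) ∘ₗ
        (TensorProduct.comm K (K × A) (K × A)).toLinearMap +
      TensorProduct.map (LinearMap.inl K K A ∘ₗ LinearMap.fst K K A)
          (LinearMap.inr K K A ∘ₗ LinearMap.snd K K A) ∘ₗ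
        (TensorProduct.comm K (K × A) (K × A)).toLinearMap +
      J ∘ₗ σE.symm.toLinearMap ∘ₗ
        TensorProduct.map (LinearMap.snd K K A) (LinearMap.snd K K A), ?_⟩
    intro p q
    simp [comm_tmul]
  have hTJ : ∀ v : A ⊗[K] A, T (J v) = J (σE.symm v) := by
    intro v
    induction v using TensorProduct.induction_on with
    | zero => simp
    | add u v hu hv => simp [hu, hv]
    | tmul a b => simp [hJ, hT, Prod.mk_zero_zero]
  have hTst : ∀ z, T (st z) = z := by
    have : T ∘ₗ st = LinearMap.id := by
      apply TensorProduct.ext'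
      intro p q
      simp only [LinearMap.comp_apply, LinearMap.id_apply]
      rw [hst, map_add, map_add, hT, hT, hTJ, hσ'σ]
      simp only [tmul_zero, map_zero, add_zero, zero_tmul, Prod.mk_zero_zero, hJ, map_tmul,
        LinearMap.inr_apply]
      conv_rhs => rw [← hsp p, ← hsp q]
      simp only [add_tmul, tmul_add]
      abel
    intro z; exact LinearMap.congr_fun this z
  have hstT : ∀ z, st (T z) = z := by
    have : st ∘ₗ T = LinearMap.id := by
      apply TensorProduct.ext'
      intro p q
      simp only [LinearMap.comp_apply, LinearMap.id_apply]
      rw [hT, map_add, map_add, st_er, st_el, OJst, hσσ']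
      simp only [hJ, map_tmul, LinearMap.inr_apply]
      rw [add_assoc, ← tmul_add, hsp q, ← add_tmul, hsp p]
    intro z; exact LinearMap.congr_fun this z
  have hbij : Function.Bijective st :=
    ⟨fun x y h => by rw [← hTst x, h, hTst y], fun z => ⟨T z, hstT z⟩⟩
  refine ⟨⟨hassoc_mt, ⟨hbij, hYBE⟩, hC1, hC2⟩, fun x => ⟨?_, ?_, ?_, ?_⟩⟩
  · rw [mt_el]; exact one_smul _ _
  · rw [mt_er]; exact one_smul _ _
  · exact st_er x 1
  · exact st_el 1 x
end
end

section
/- Let K be a field of characteristic 0, λ ∈ K, and let (R, m, σ) be a braided algebra such that (R, P) is a Rota–Baxter algebra of weight λ for a linear endomorphism P of R, and such that σ(P ⊗ id_R) = (id_R ⊗ P)σ and σ(id_R ⊗ P) = (P ⊗ id_R)σ. Define the double product ⋆_P : R ⊗ R → R by x ⋆_P y = xP(y) + P(x)y + λxy. Then (R, ⋆_P, σ) is again a braided algebra; in particular σ(⋆_P ⊗ id_R) = (id_R ⊗ ⋆_P)σ₁σ₂ and σ(id_R ⊗ ⋆_P) = (⋆_P ⊗ id_R)σ₂σ₁ hold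 on R ⊗ R ⊗ R, where σ₁ = σ ⊗ id_R and σ₂ = id_R ⊗ σ. -/
open TensorProduct

noncomputable section

section AuxDP
variable {K : Type*} [Field K] {A : Type*} [AddCommGroup A] [Module K A]

/-- conjugation by the associator is multiplicative -/
lemma conj_comp_dp (f g : (A ⊗[K] A) ⊗[K] A →ₗ[K] (A ⊗[K] A) ⊗[K] A) :
    ((TensorProduct.assoc K A A A).toLinearMap ∘ₗ f ∘ₗ (TensorProduct.assoc K A A A).symm.toLinearMap) ∘ₗ
      ((TensorProduct.assoc K A A A).toLinearMap ∘ₗ g ∘ₗ (TensorProduct.assoc K A A A).symm.toLinearMap) =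
    (TensorProduct.assoc K A A A).toLinearMap ∘ₗ (f ∘ₗ g) ∘ₗ (TensorProduct.assoc K A A A).symm.toLinearMap := by
  ext x y z
  simp

lemma P1_conj_dp (P : A →ₗ[K] A) :
    (TensorProduct.map P LinearMap.id : A ⊗[K] (A ⊗[K] A) →ₗ[K] A ⊗[K] (A ⊗[K] A)) =
    (TensorProduct.assoc K A A A).toLinearMap ∘ₗ
      TensorProduct.map (TensorProduct.map P LinearMap.id) LinearMap.id ∘ₗ
      (TensorProduct.assoc K A A A).symm.toLinearMap := by
  ext x y z
  simp

lemma P2_conj_dp (P : A →ₗ[K] A) :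
    (TensorProduct.map LinearMap.id (TensorProduct.map P LinearMap.id) :
      A ⊗[K] (A ⊗[K] A) →ₗ[K] A ⊗[K] (A ⊗[K] A)) =
    (TensorProduct.assoc K A A A).toLinearMap ∘ₗ
      TensorProduct.map (TensorProduct.map LinearMap.id P) LinearMap.id ∘ₗ
      (TensorProduct.assoc K A A A).symm.toLinearMap := by
  ext x y z
  simp

lemma P3_conj_dp (P : A →ₗ[K] A) :
    (TensorProduct.map LinearMap.id (TensorProduct.map LinearMap.id P) :
      A ⊗[K] (A ⊗[K] A) →ₗ[K] A ⊗[K] (A ⊗[K] A)) =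
    (TensorProduct.assoc K A A A).toLinearMap ∘ₗ
      TensorProduct.map LinearMap.id P ∘ₗ
      (TensorProduct.assoc K A A A).symm.toLinearMap := by
  ext x y z
  simp

variable (σ : A ⊗[K] A →ₗ[K] A ⊗[K] A) (P : A →ₗ[K] A)

lemma c11_dp (h1 : σ ∘ₗ TensorProduct.map P LinearMap.id = TensorProduct.map LinearMap.id P ∘ₗ σ) :
    braid1 σ ∘ₗ TensorProduct.map P LinearMap.id =
      TensorProduct.map LinearMap.id (TensorProduct.map P LinearMap.id) ∘ₗ braid1 σ := by
  unfold braid1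
  rw [P1_conj_dp, P2_conj_dp, conj_comp_dp, conj_comp_dp]
  congr 1
  rw [← TensorProduct.map_comp, ← TensorProduct.map_comp, h1]

lemma c12_dp (h2 : σ ∘ₗ TensorProduct.map LinearMap.id P = TensorProduct.map P LinearMap.id ∘ₗ σ) :
    braid1 σ ∘ₗ TensorProduct.map LinearMap.id (TensorProduct.map P LinearMap.id) =
      TensorProduct.map P LinearMap.id ∘ₗ braid1 σ := by
  unfold braid1
  rw [P1_conj_dp, P2_conj_dp, conj_comp_dp, conj_comp_dp]
  congr 1
  rw [← TensorProduct.map_comp, ← TensorProduct.map_comp, h2]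

lemma c13_dp :
    braid1 σ ∘ₗ TensorProduct.map LinearMap.id (TensorProduct.map LinearMap.id P) =
      TensorProduct.map LinearMap.id (TensorProduct.map LinearMap.id P) ∘ₗ braid1 σ := by
  unfold braid1
  rw [P3_conj_dp, conj_comp_dp, conj_comp_dp]
  congr 1
  rw [← TensorProduct.map_comp, ← TensorProduct.map_comp]
  simp

lemma c21_dp :
    braid2 σ ∘ₗ TensorProduct.map P LinearMap.id =
      TensorProduct.map P LinearMap.id ∘ₗ braid2 σ := by
  unfold braid2
  rw [← TensorProduct.map_comp, ← TensorProduct.map_comp]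
  simp

lemma c22_dp (h1 : σ ∘ₗ TensorProduct.map P LinearMap.id = TensorProduct.map LinearMap.id P ∘ₗ σ) :
    braid2 σ ∘ₗ TensorProduct.map LinearMap.id (TensorProduct.map P LinearMap.id) =
      TensorProduct.map LinearMap.id (TensorProduct.map LinearMap.id P) ∘ₗ braid2 σ := by
  unfold braid2
  rw [← TensorProduct.map_comp, ← TensorProduct.map_comp, h1]

lemma c23_dp (h2 : σ ∘ₗ TensorProduct.map LinearMap.id P = TensorProduct.map P LinearMap.id ∘ₗ σ) :
    braid2 σ ∘ₗ TensorProduct.map LinearMap.id (TensorProduct.map LinearMap.id P) =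
      TensorProduct.map LinearMap.id (TensorProduct.map P LinearMap.id) ∘ₗ braid2 σ := by
  unfold braid2
  rw [← TensorProduct.map_comp, ← TensorProduct.map_comp, h2]

end AuxDP

/-- if `(R, m, σ)` is a braided algebra, `P` is a Rota–Baxter operator of weight
`lam` on `(R, m)`, and `σ` is compatible with `P` via `σ(P ⊗ id) = (id ⊗ P)σ` and
`σ(id ⊗ P) = (P ⊗ id)σ`, then `R` with the double product
`x ⋆_P y = xP(y) + P(x)y + lam·xy` and the same braiding `σ` is again a braided algebra. -/


theorem double_product_isBraidedAlgebra (K : Type*) [Field K] [CharZero K] (lam : K)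
    (R : Type*) [AddCommGroup R] [Module K R]
    (m : R ⊗[K] R →ₗ[K] R) (σ : R ⊗[K] R →ₗ[K] R ⊗[K] R)
    (hbraided : IsBraidedAlgebra m σ)
    (P : R →ₗ[K] R)
    (hRB : ∀ x y : R,
      m (P x ⊗ₜ[K] P y) =
        P (m (x ⊗ₜ[K] P y)) + P (m (P x ⊗ₜ[K] y)) + lam • P (m (x ⊗ₜ[K] y)))
    (h1 : σ ∘ₗ TensorProduct.map P LinearMap.id = TensorProduct.map LinearMap.id P ∘ₗ σ)
    (h2 : σ ∘ₗ TensorProduct.map LinearMap.id P = TensorProduct.map P LinearMap.id ∘ₗ σ)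
    (star : R ⊗[K] R →ₗ[K] R)
    (hstar : ∀ x y : R,
      star (x ⊗ₜ[K] y) =
        m (x ⊗ₜ[K] P y) + m (P x ⊗ₜ[K] y) + lam • m (x ⊗ₜ[K] y)) :
    IsBraidedAlgebra star σ := by
  obtain ⟨hassoc, hbr, hc1, hc2⟩ := hbraided
  have hma : ∀ a b c : R, m (m (a ⊗ₜ[K] b) ⊗ₜ[K] c) = m (a ⊗ₜ[K] m (b ⊗ₜ[K] c)) := by
    intro a b c
    have := LinearMap.congr_fun hassoc (a ⊗ₜ[K] (b ⊗ₜ[K] c))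
    simpa [mulL, mulR] using this
  have hPstar : ∀ a b : R, P (star (a ⊗ₜ[K] b)) = m (P a ⊗ₜ[K] P b) := by
    intro a b
    rw [hstar, map_add, map_add, map_smul, hRB]
  have hmulL : mulL star = mulL m ∘ₗ TensorProduct.map LinearMap.id (TensorProduct.map P LinearMap.id)
      + mulL m ∘ₗ TensorProduct.map P LinearMap.id + lam • mulL m := by
    ext x y z
    simp [mulL, hstar, add_tmul, smul_tmul']
  have hmulR : mulR star = mulR m ∘ₗ TensorProduct.map LinearMap.id (TensorProduct.map LinearMap.id P)
      + mulR m ∘ₗ TensorProduct.map LinearMap.id (TensorProduct.map P LinearMap.id) + lam • mulR m := by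
    ext x y z
    simp [mulR, hstar, tmul_add, tmul_smul]
  refine ⟨?_, hbr, ?_, ?_⟩
  · -- associativity of star
    ext x y z
    simp only [TensorProduct.AlgebraTensorModule.curry_apply, TensorProduct.curry_apply,
      LinearMap.coe_restrictScalars, LinearMap.comp_apply, mulL, mulR,
      TensorProduct.map_tmul, LinearMap.id_apply, LinearEquiv.coe_coe,
      TensorProduct.assoc_symm_tmul]
    rw [hstar (star (x ⊗ₜ[K] y)) z, hstar x (star (y ⊗ₜ[K] z)), hPstar, hPstar,
      hstar x y, hstar y z]
    simp only [add_tmul, tmul_add, ← smul_tmul', tmul_smul, map_add, map_smul, smul_add,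
      smul_smul]
    simp only [hma]
    abel
  · -- first compatibility
    have t1 : (mulR m ∘ₗ TensorProduct.map LinearMap.id (TensorProduct.map LinearMap.id P)) ∘ₗ
        braid1 σ ∘ₗ braid2 σ =
        σ ∘ₗ mulL m ∘ₗ TensorProduct.map LinearMap.id (TensorProduct.map P LinearMap.id) := by
      calc (mulR m ∘ₗ TensorProduct.map LinearMap.id (TensorProduct.map LinearMap.id P)) ∘ₗ
            braid1 σ ∘ₗ braid2 σ
          = mulR m ∘ₗ (TensorProduct.map LinearMap.id (TensorProduct.map LinearMap.id P) ∘ₗ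
              braid1 σ) ∘ₗ braid2 σ := by simp only [LinearMap.comp_assoc]
        _ = mulR m ∘ₗ (braid1 σ ∘ₗ
              TensorProduct.map LinearMap.id (TensorProduct.map LinearMap.id P)) ∘ₗ braid2 σ := by
            rw [c13_dp]
        _ = (mulR m ∘ₗ braid1 σ) ∘ₗ
              TensorProduct.map LinearMap.id (TensorProduct.map LinearMap.id P) ∘ₗ braid2 σ := by
            simp only [LinearMap.comp_assoc]
        _ = (mulR m ∘ₗ braid1 σ) ∘ₗ braid2 σ ∘ₗ
              TensorProduct.map LinearMap.id (TensorProduct.map P LinearMap.id) := by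
            rw [← c22_dp σ P h1]
        _ = (mulR m ∘ₗ braid1 σ ∘ₗ braid2 σ) ∘ₗ
              TensorProduct.map LinearMap.id (TensorProduct.map P LinearMap.id) := by
            simp only [LinearMap.comp_assoc]
        _ = (σ ∘ₗ mulL m) ∘ₗ
              TensorProduct.map LinearMap.id (TensorProduct.map P LinearMap.id) := by rw [hc1]
        _ = _ := by simp only [LinearMap.comp_assoc]
    have t2 : (mulR m ∘ₗ TensorProduct.map LinearMap.id (TensorProduct.map P LinearMap.id)) ∘ₗ
        braid1 σ ∘ₗ braid2 σ =
        σ ∘ₗ mulL m ∘ₗ TensorProduct.map P LinearMap.id := by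
      calc (mulR m ∘ₗ TensorProduct.map LinearMap.id (TensorProduct.map P LinearMap.id)) ∘ₗ
            braid1 σ ∘ₗ braid2 σ
          = mulR m ∘ₗ (TensorProduct.map LinearMap.id (TensorProduct.map P LinearMap.id) ∘ₗ
              braid1 σ) ∘ₗ braid2 σ := by simp only [LinearMap.comp_assoc]
        _ = mulR m ∘ₗ (braid1 σ ∘ₗ TensorProduct.map P LinearMap.id) ∘ₗ braid2 σ := by
            rw [← c11_dp σ P h1]
        _ = (mulR m ∘ₗ braid1 σ) ∘ₗ TensorProduct.map P LinearMap.id ∘ₗ braid2 σ := by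
            simp only [LinearMap.comp_assoc]
        _ = (mulR m ∘ₗ braid1 σ) ∘ₗ braid2 σ ∘ₗ TensorProduct.map P LinearMap.id := by
            rw [← c21_dp]
        _ = (mulR m ∘ₗ braid1 σ ∘ₗ braid2 σ) ∘ₗ TensorProduct.map P LinearMap.id := by
            simp only [LinearMap.comp_assoc]
        _ = (σ ∘ₗ mulL m) ∘ₗ TensorProduct.map P LinearMap.id := by rw [hc1]
        _ = _ := by simp only [LinearMap.comp_assoc]
    rw [hmulR, hmulL]
    simp only [LinearMap.add_comp, LinearMap.smul_comp, LinearMap.comp_add, LinearMap.comp_smul]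
    rw [t1, t2, hc1]
  · -- second compatibility
    have t1 : (mulL m ∘ₗ TensorProduct.map LinearMap.id (TensorProduct.map P LinearMap.id)) ∘ₗ
        braid2 σ ∘ₗ braid1 σ =
        σ ∘ₗ mulR m ∘ₗ TensorProduct.map LinearMap.id (TensorProduct.map LinearMap.id P) := by
      calc (mulL m ∘ₗ TensorProduct.map LinearMap.id (TensorProduct.map P LinearMap.id)) ∘ₗ
            braid2 σ ∘ₗ braid1 σ
          = mulL m ∘ₗ (TensorProduct.map LinearMap.id (TensorProduct.map P LinearMap.id) ∘ₗ
              braid2 σ) ∘ₗ braid1 σ := by simp only [LinearMap.comp_assoc]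
        _ = mulL m ∘ₗ (braid2 σ ∘ₗ
              TensorProduct.map LinearMap.id (TensorProduct.map LinearMap.id P)) ∘ₗ braid1 σ := by
            rw [← c23_dp σ P h2]
        _ = (mulL m ∘ₗ braid2 σ) ∘ₗ
              TensorProduct.map LinearMap.id (TensorProduct.map LinearMap.id P) ∘ₗ braid1 σ := by
            simp only [LinearMap.comp_assoc]
        _ = (mulL m ∘ₗ braid2 σ) ∘ₗ braid1 σ ∘ₗ
              TensorProduct.map LinearMap.id (TensorProduct.map LinearMap.id P) := by
            rw [c13_dp]
        _ = (mulL m ∘ₗ braid2 σ ∘ₗ braid1 σ) ∘ₗ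
              TensorProduct.map LinearMap.id (TensorProduct.map LinearMap.id P) := by
            simp only [LinearMap.comp_assoc]
        _ = (σ ∘ₗ mulR m) ∘ₗ
              TensorProduct.map LinearMap.id (TensorProduct.map LinearMap.id P) := by rw [hc2]
        _ = _ := by simp only [LinearMap.comp_assoc]
    have t2 : (mulL m ∘ₗ TensorProduct.map P LinearMap.id) ∘ₗ braid2 σ ∘ₗ braid1 σ =
        σ ∘ₗ mulR m ∘ₗ TensorProduct.map LinearMap.id (TensorProduct.map P LinearMap.id) := by
      calc (mulL m ∘ₗ TensorProduct.map P LinearMap.id) ∘ₗ braid2 σ ∘ₗ braid1 σ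
          = mulL m ∘ₗ (TensorProduct.map P LinearMap.id ∘ₗ braid2 σ) ∘ₗ braid1 σ := by
            simp only [LinearMap.comp_assoc]
        _ = mulL m ∘ₗ (braid2 σ ∘ₗ TensorProduct.map P LinearMap.id) ∘ₗ braid1 σ := by
            rw [c21_dp]
        _ = (mulL m ∘ₗ braid2 σ) ∘ₗ TensorProduct.map P LinearMap.id ∘ₗ braid1 σ := by
            simp only [LinearMap.comp_assoc]
        _ = (mulL m ∘ₗ braid2 σ) ∘ₗ braid1 σ ∘ₗ
              TensorProduct.map LinearMap.id (TensorProduct.map P LinearMap.id) := by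
            rw [← c12_dp σ P h2]
        _ = (mulL m ∘ₗ braid2 σ ∘ₗ braid1 σ) ∘ₗ
              TensorProduct.map LinearMap.id (TensorProduct.map P LinearMap.id) := by
            simp only [LinearMap.comp_assoc]
        _ = (σ ∘ₗ mulR m) ∘ₗ
              TensorProduct.map LinearMap.id (TensorProduct.map P LinearMap.id) := by rw [hc2]
        _ = _ := by simp only [LinearMap.comp_assoc]
    rw [hmulL, hmulR]
    simp only [LinearMap.add_comp, LinearMap.smul_comp, LinearMap.comp_add, LinearMap.comp_smul]
    rw [t1, t2, hc2]
end
end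

section
/- Let K be a field of characteristic 0 and (R, ·, P) a Rota–Baxter algebra of weight 1. Define three binary operations on R by x ≺ y = x · P(y), x ≻ y = P(x) · y, and x · y (the original product). Then (R, ≺, ≻, ·) is a tridendriform algebra: writing x ∗ y = x ≺ y + x ≻ y + x · y, for all x, y, z ∈ R one has (x ≺ y) ≺ z = x ≺ (y ∗ z), (x ≻ y) ≺ z = x ≻ (y ≺ z), (x ∗ y) ≻ z = x ≻ (y ≻ z), (x ≻ y) · z = x ≻ (y · z), (x ≺ y) · z = x · (y ≻ z), (x · y) ≺ z = x · (y ≺ z), and (x · y) · z = x · (y · z). -/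
/-- a Rota–Baxter algebra `(R, ·, P)` of weight `1` yields a tridendriform
algebra via `x ≺ y = x·P(y)`, `x ≻ y = P(x)·y`, and the original product `x · y`;
here `x ∗ y = x ≺ y + x ≻ y + x·y = x·P(y) + P(x)·y + x·y`. -/
theorem rotaBaxter_weight_one_tridendriform
    (K : Type*) [Field K] [CharZero K]
    (R : Type*) [NonUnitalRing R] [Module K R] [SMulCommClass K R R] [IsScalarTower K R R]
    (P : R →ₗ[K] R)
    (hRB : ∀ x y : R, P x * P y = P (x * P y) + P (P x * y) + P (x * y)) :
    ∀ x y z : R,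
      ((x * P y) * P z = x * P (y * P z + P y * z + y * z)) ∧
      ((P x * y) * P z = P x * (y * P z)) ∧
      (P (x * P y + P x * y + x * y) * z = P x * (P y * z)) ∧
      ((P x * y) * z = P x * (y * z)) ∧
      ((x * P y) * z = x * (P y * z)) ∧
      ((x * y) * P z = x * (y * P z)) ∧
      ((x * y) * z = x * (y * z)) := by
  intro x y z
  refine ⟨?_, mul_assoc _ _ _, ?_, mul_assoc _ _ _, mul_assoc _ _ _, mul_assoc _ _ _,
    mul_assoc _ _ _⟩
  · rw [mul_assoc, hRB]; simp [map_add]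
  · simp only [map_add]; rw [← hRB, mul_assoc]
end
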